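/- arXiv:2012.14263 — 4 statements merged into one kernel-verified Lean document; each statement's English description precedes it below -/
import Mathlib

section
/- A rank-1 lattice Λ(z,M) is a reconstructing rank-1 lattice for a finite frequency set I (i.e. Q_{z,M}(p(\circ)e^{-2πik·\circ}) = \hat{p}_k for all k ∈ I and all p ∈ Π_I) if and only if the residues h·z mod M are pairwise distinct for h ∈ I, equivalently (h−k)·z ≢ 0 (mod M) for all distinct h, k ∈ I. -/
/-!
At the node `x = jz/M mod 1` the monomial `e^{2πi h·x}` equals `(ζ ^ (h·z)) ^ j` with
`ζ = e^{2πi/M}`, because taking fractional parts changes `h·x` by an integer. Summing the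
geometric series over `j`, the lattice rule sends `e^{2πi (h-k)·x}` to `1` if `M ∣ (h-k)·z`
and to `0` otherwise, so `Q_{z,M}(p e^{-2πik·∘}) = ∑ p̂_h` over those `h ∈ I` with
`h·z ≡ k·z (mod M)`. This is `p̂_k` for every `p ∈ Π_I` exactly when `k` is the only such `h`.
-/

open Complex Finset
open scoped Real

theorem IsPrimitiveRoot.geom_sum_zpow_eq_ite {K : Type*} [Field K] {ζ : K} {M : ℕ}
    (hζ : IsPrimitiveRoot ζ M) (a : ℤ) :
    ∑ j ∈ range M, (ζ ^ a) ^ j = if (M : ℤ) ∣ a then (M : K) else 0 := by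
  split_ifs with ha
  · simp [(hζ.zpow_eq_one_iff_dvd a).mpr ha]
  · have hne : ζ ^ a ≠ 1 := mt (hζ.zpow_eq_one_iff_dvd a).mp ha
    have hpow : (ζ ^ a) ^ M = 1 := by
      rw [← zpow_natCast, ← zpow_mul, mul_comm, zpow_mul, hζ.zpow_eq_one, one_zpow]
    rw [geom_sum_eq hne, hpow, sub_self, zero_div]

lemma forall_sum_mul_ite_eq_iff {α R : Type*} [Semiring R] [Nontrivial R] (I : Finset α)
    (P : α → α → Prop) [DecidableRel P] (hP : ∀ a, P a a) :
    (∀ c : α → R, ∀ k ∈ I, ∑ h ∈ I, c h * (if P h k then 1 else 0) = c k) ↔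
      ∀ h ∈ I, ∀ k ∈ I, P h k → h = k := by
  classical
  constructor
  · intro H h hh k hk hhk
    by_contra hne
    have := H (fun x => if x = h then 1 else 0) k hk
    rw [sum_eq_single_of_mem h hh fun b _ hb => by simp [hb], if_pos rfl, if_pos hhk,
      if_neg (Ne.symm hne), one_mul] at this
    exact one_ne_zero this
  · intro H c k hk
    rw [sum_eq_single_of_mem k hk fun h hh hne => by simp [mt (H h hh k hk) hne], if_pos (hP k),
      mul_one]

variable {d : ℕ}

noncomputable def fourierMonomial (h : Fin d → ℤ) (x : Fin d → ℝ) : ℂ :=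
  exp (2 * π * I * ∑ i, (h i : ℂ) * (x i : ℂ))

noncomputable def latticeNode (M : ℕ) (z : Fin d → ℤ) (j : ℕ) : Fin d → ℝ :=
  fun i => Int.fract ((j : ℝ) * (z i : ℝ) / (M : ℝ))

noncomputable def latticeRule (M : ℕ) (z : Fin d → ℤ) (f : (Fin d → ℝ) → ℂ) : ℂ :=
  (M : ℂ)⁻¹ * ∑ j ∈ range M, f (latticeNode M z j)

lemma fourierMonomial_fract (h : Fin d → ℤ) (x : Fin d → ℝ) :
    fourierMonomial h (fun i => Int.fract (x i)) = fourierMonomial h x := by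
  refine exp_eq_exp_iff_exists_int.mpr ⟨-∑ i, h i * ⌊x i⌋, ?_⟩
  simp only [Int.fract, ofReal_sub, ofReal_intCast, mul_sub, sum_sub_distrib]
  push_cast
  ring

lemma fourierMonomial_mul_exp_neg (h k : Fin d → ℤ) (x : Fin d → ℝ) :
    fourierMonomial h x * exp (-(2 * π * I * ∑ i, (k i : ℂ) * (x i : ℂ))) =
      fourierMonomial (h - k) x := by
  rw [fourierMonomial, fourierMonomial, ← exp_add]
  congr 1
  simp only [Pi.sub_apply, Int.cast_sub, sub_mul, sum_sub_distrib]
  ring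

lemma fourierMonomial_latticeNode {M : ℕ} (hM : M ≠ 0) (z h : Fin d → ℤ) (j : ℕ) :
    fourierMonomial h (latticeNode M z j) = (exp (2 * π * I / M) ^ ∑ i, h i * z i) ^ j := by
  unfold latticeNode
  rw [fourierMonomial_fract, fourierMonomial, ← exp_int_mul, ← exp_nat_mul]
  congr 1
  push_cast
  simp only [mul_sum, sum_mul]
  refine sum_congr rfl fun i _ => ?_
  field_simp

lemma latticeRule_fourierMonomial {M : ℕ} (hM : M ≠ 0) (z h : Fin d → ℤ) :
    latticeRule M z (fourierMonomial h) = if (M : ℤ) ∣ ∑ i, h i * z i then 1 else 0 := by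
  simp only [latticeRule, fourierMonomial_latticeNode hM,
    (isPrimitiveRoot_exp M hM).geom_sum_zpow_eq_ite]
  split_ifs
  · exact inv_mul_cancel₀ (Nat.cast_ne_zero.mpr hM)
  · exact mul_zero _

lemma latticeRule_sum {ι : Type*} (M : ℕ) (z : Fin d → ℤ) (I : Finset ι) (c : ι → ℂ)
    (f : ι → (Fin d → ℝ) → ℂ) :
    latticeRule M z (fun x => ∑ h ∈ I, c h * f h x) = ∑ h ∈ I, c h * latticeRule M z (f h) := by
  simp only [latticeRule, mul_sum]
  rw [sum_comm]
  exact sum_congr rfl fun _ _ => sum_congr rfl fun _ _ => mul_left_comm _ _ _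

lemma latticeRule_mul_exp_neg {M : ℕ} (hM : M ≠ 0) (z : Fin d → ℤ) (I : Finset (Fin d → ℤ))
    (c : (Fin d → ℤ) → ℂ) (k : Fin d → ℤ) :
    latticeRule M z (fun x => (∑ h ∈ I, c h * fourierMonomial h x) *
        exp (-(2 * π * Complex.I * ∑ i, (k i : ℂ) * (x i : ℂ)))) =
      ∑ h ∈ I, c h * if (M : ℤ) ∣ ∑ i, (h i - k i) * z i then 1 else 0 := by
  simp only [sum_mul, mul_assoc (c _), fourierMonomial_mul_exp_neg, latticeRule_sum,
    latticeRule_fourierMonomial hM, Pi.sub_apply]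

/-- `Λ(z,M)` is a reconstructing rank-1 lattice for `I` (all Fourier coefficients
of all `p ∈ Π_I` are obtained exactly) iff the residues `h·z mod M`, `h ∈ I`, are
pairwise distinct, equivalently `(h−k)·z ≢ 0 (mod M)` for all distinct `h,k ∈ I`. -/
theorem reconstruction_iff (d M : ℕ) (hM : 0 < M) (z : Fin d → ℤ)
    (I : Finset (Fin d → ℤ)) :
    ((∀ c : (Fin d → ℤ) → ℂ, ∀ k ∈ I,
        (M : ℂ)⁻¹ * ∑ j ∈ Finset.range M,
            (∑ h ∈ I, c h * Complex.exp (2 * Real.pi * Complex.I *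
                ∑ i, (h i : ℂ) * Complex.ofReal (Int.fract ((j : ℝ) * (z i : ℝ) / (M : ℝ))))) *
              Complex.exp (-(2 * Real.pi * Complex.I *
                ∑ i, (k i : ℂ) * Complex.ofReal (Int.fract ((j : ℝ) * (z i : ℝ) / (M : ℝ))))) =
          c k) ↔
      (∀ h ∈ I, ∀ k ∈ I,
          (∑ i, h i * z i) % (M : ℤ) = (∑ i, k i * z i) % (M : ℤ) → h = k)) ∧
    ((∀ h ∈ I, ∀ k ∈ I,
        (∑ i, h i * z i) % (M : ℤ) = (∑ i, k i * z i) % (M : ℤ) → h = k) ↔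
      (∀ h ∈ I, ∀ k ∈ I, h ≠ k → ¬ ((M : ℤ) ∣ ∑ i, (h i - k i) * z i))) := by
  have emod_eq_iff (h k : Fin d → ℤ) :
      (∑ i, h i * z i) % (M : ℤ) = (∑ i, k i * z i) % M ↔ (M : ℤ) ∣ ∑ i, (h i - k i) * z i := by
    rw [← Int.ModEq, Int.modEq_iff_dvd, ← dvd_neg, neg_sub]
    simp only [sub_mul, sum_sub_distrib]
  show ((∀ c : (Fin d → ℤ) → ℂ, ∀ k ∈ I,
      latticeRule M z (fun x => (∑ h ∈ I, c h * fourierMonomial h x) *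
        exp (-(2 * π * Complex.I * ∑ i, (k i : ℂ) * (x i : ℂ)))) = c k) ↔ _) ∧ _
  simp only [latticeRule_mul_exp_neg hM.ne', emod_eq_iff]
  refine ⟨forall_sum_mul_ite_eq_iff I _ fun h => by simp, ?_⟩
  simp only [ne_eq, not_imp_not]
end

section
/- Let p₁ > 2 be a prime. Then the smallest prime p₂ strictly greater than p₁/2 satisfies p₂ ≤ 5p₁/7. -/
/-
Chebyshev's method. The weight `ν(m) = m + ⌊m/30⌋ - ⌊m/2⌋ - ⌊m/3⌋ - ⌊m/5⌋` takes only the values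
0 and 1, and equals 1 for `1 ≤ m ≤ 5`. Since `log n! = ∑_{d ≤ n} Λ(d) ⌊n/d⌋`, the combination
`T(n) = log n! + log ⌊n/30⌋! - log ⌊n/2⌋! - log ⌊n/3⌋! - log ⌊n/5⌋!` equals `∑_{d ≤ n} Λ(d) ν(n/d)`,
so `ψ(n) - ψ(n/6) ≤ T(n) ≤ ψ(n)`, while Stirling-type estimates give `T(n) = A n + O(log n)` with
`A = log 2 / 2 + log 3 / 3 + log 5 / 5 - log 30 / 30 ≈ 0.9212`. Iterating the left inequality gives
`ψ(x) ≤ 1.25 x + 287`, and with the Costa Pereira bound `ψ(x) - θ(x) ≤ 3 ψ(√x)` we get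
`θ(10x/7) > θ(x)` for `x ≥ 50000`, because `A · 10/7 > 1.25`. Below that range a chain of primes,
each less than `10/7` times the previous one, supplies the prime directly.
-/

open Finset Real Chebyshev
open ArithmeticFunction hiding log
open scoped Nat

theorem log_factorial_eq_sum_log (n : ℕ) : log (n ! : ℝ) = ∑ k ∈ Ioc 0 n, log k := by
  induction n with
  | zero => simp
  | succ n ih =>
    rw [sum_Ioc_succ_top n.zero_le, ← ih, Nat.factorial_succ, Nat.cast_mul,
      log_mul (by positivity) (by positivity), add_comm]

theorem log_factorial_eq_sum_vonMangoldt (n : ℕ) :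
    log (n ! : ℝ) = ∑ d ∈ Ioc 0 n, Λ d * (n / d : ℕ) := by
  rw [← sum_Ioc_mul_zeta_eq_sum, vonMangoldt_mul_zeta, log_factorial_eq_sum_log]
  simp only [log_apply]

theorem log_factorial_div_eq_sum_vonMangoldt (n k : ℕ) :
    log ((n / k)! : ℝ) = ∑ d ∈ Ioc 0 n, Λ d * (n / d / k : ℕ) := by
  rw [log_factorial_eq_sum_vonMangoldt]
  refine (sum_subset (Ioc_subset_Ioc_right (Nat.div_le_self n k)) fun d hd hd' ↦ ?_).trans
    (sum_congr rfl fun d _ ↦ ?_)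
  · simp only [mem_Ioc, not_and, not_le] at hd hd'
    rw [Nat.div_eq_of_lt (hd' hd.1), Nat.cast_zero, mul_zero]
  · rw [Nat.div_div_eq_div_mul, Nat.div_div_eq_div_mul, mul_comm k]

theorem psi_natCast (n : ℕ) : ψ n = ∑ d ∈ Ioc 0 n, Λ d := by
  simp [psi]

noncomputable def chebyshevWeight (m : ℕ) : ℝ :=
  m + (m / 30 : ℕ) - (m / 2 : ℕ) - (m / 3 : ℕ) - (m / 5 : ℕ)

theorem chebyshevWeight_nonneg (m : ℕ) : 0 ≤ chebyshevWeight m := by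
  have h : m / 2 + m / 3 + m / 5 ≤ m + m / 30 := by omega
  have := (Nat.cast_le (α := ℝ)).2 h
  push_cast at this
  unfold chebyshevWeight
  linarith

theorem chebyshevWeight_le_one (m : ℕ) : chebyshevWeight m ≤ 1 := by
  have h : m + m / 30 ≤ m / 2 + m / 3 + m / 5 + 1 := by omega
  have := (Nat.cast_le (α := ℝ)).2 h
  push_cast at this
  unfold chebyshevWeight
  linarith

theorem chebyshevWeight_eq_one {m : ℕ} (h1 : 1 ≤ m) (h5 : m ≤ 5) : chebyshevWeight m = 1 := by
  interval_cases m <;> norm_num [chebyshevWeight]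

noncomputable def chebyshevSum (n : ℕ) : ℝ :=
  log (n ! : ℝ) + log ((n / 30)! : ℝ) - log ((n / 2)! : ℝ) - log ((n / 3)! : ℝ) -
    log ((n / 5)! : ℝ)

theorem chebyshevSum_eq_sum (n : ℕ) :
    chebyshevSum n = ∑ d ∈ Ioc 0 n, Λ d * chebyshevWeight (n / d) := by
  simp only [chebyshevSum, chebyshevWeight, log_factorial_eq_sum_vonMangoldt n,
    log_factorial_div_eq_sum_vonMangoldt, ← sum_add_distrib, ← sum_sub_distrib]
  refine sum_congr rfl fun d _ ↦ ?_
  ring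

theorem chebyshevSum_le_psi (n : ℕ) : chebyshevSum n ≤ ψ n := by
  rw [chebyshevSum_eq_sum, psi_natCast]
  exact sum_le_sum fun d _ ↦
    mul_le_of_le_one_right vonMangoldt_nonneg (chebyshevWeight_le_one _)

theorem psi_sub_psi_div_six_le_chebyshevSum (n : ℕ) :
    ψ n - ψ (n / 6 : ℕ) ≤ chebyshevSum n := by
  rw [chebyshevSum_eq_sum, psi_natCast, psi_natCast,
    ← sum_Ioc_consecutive _ (Nat.zero_le (n / 6)) (Nat.div_le_self n 6),
    ← sum_Ioc_consecutive _ (Nat.zero_le (n / 6)) (Nat.div_le_self n 6), add_sub_cancel_left]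
  have hhead : 0 ≤ ∑ d ∈ Ioc 0 (n / 6), Λ d * chebyshevWeight (n / d) :=
    sum_nonneg fun d _ ↦ mul_nonneg vonMangoldt_nonneg (chebyshevWeight_nonneg _)
  have htail : ∑ d ∈ Ioc (n / 6) n, Λ d * chebyshevWeight (n / d) = ∑ d ∈ Ioc (n / 6) n, Λ d := by
    refine sum_congr rfl fun d hd ↦ ?_
    rw [mem_Ioc] at hd
    rw [chebyshevWeight_eq_one, mul_one]
    · exact (Nat.one_le_div_iff (by omega)).2 hd.2
    · exact Nat.lt_succ_iff.1 ((Nat.div_lt_iff_lt_mul (by omega)).2 (by omega))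
  linarith

-- `∫₁ˣ log t dt`
noncomputable def logFactorialApprox (x : ℝ) : ℝ := x * log x - x + 1

theorem mul_log_sub_log_le_sub {a b : ℝ} (ha : 0 < a) (hb : 0 < b) :
    b * (log a - log b) ≤ a - b := by
  have h := log_le_sub_one_of_pos (div_pos ha hb)
  rw [log_div ha.ne' hb.ne'] at h
  calc b * (log a - log b) ≤ b * (a / b - 1) := by gcongr
    _ = a - b := by field_simp

theorem logFactorialApprox_sub_mem {a b : ℝ} (ha : 0 < a) (hb : 0 < b) :
    (a - b) * log b ≤ logFactorialApprox a - logFactorialApprox b ∧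
      logFactorialApprox a - logFactorialApprox b ≤ (a - b) * log a := by
  have h₁ := mul_log_sub_log_le_sub ha hb
  have h₂ := mul_log_sub_log_le_sub hb ha
  unfold logFactorialApprox
  constructor <;> nlinarith

theorem log_factorial_mem {m : ℕ} (hm : 1 ≤ m) :
    logFactorialApprox m ≤ log (m ! : ℝ) ∧ log (m ! : ℝ) ≤ logFactorialApprox m + log m := by
  induction m, hm using Nat.le_induction with
  | base => simp [logFactorialApprox]
  | succ k hk ih =>
    have hk' : (0 : ℝ) < k := by positivity
    obtain ⟨hlo, hhi⟩ := logFactorialApprox_sub_mem (a := k + 1) (by positivity) hk'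
    rw [Nat.factorial_succ, Nat.cast_mul, log_mul (by positivity) (by positivity)]
    push_cast
    constructor <;> nlinarith

theorem abs_log_factorial_floor_sub_le {x : ℝ} (hx : 1 ≤ x) :
    |log (⌊x⌋₊ ! : ℝ) - logFactorialApprox x| ≤ log x := by
  have hfloor : 1 ≤ ⌊x⌋₊ := Nat.le_floor (by exact_mod_cast hx)
  have hb : (1 : ℝ) ≤ ⌊x⌋₊ := by exact_mod_cast hfloor
  have hbx : (⌊x⌋₊ : ℝ) ≤ x := Nat.floor_le (by linarith)
  have hxb : x < ⌊x⌋₊ + 1 := Nat.lt_floor_add_one x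
  obtain ⟨hfac_lo, hfac_hi⟩ := log_factorial_mem hfloor
  obtain ⟨hlo, hhi⟩ := logFactorialApprox_sub_mem (a := x) (b := ⌊x⌋₊) (by linarith) (by linarith)
  have hlogb : 0 ≤ log (⌊x⌋₊ : ℝ) := log_nonneg hb
  have hlogbx : log (⌊x⌋₊ : ℝ) ≤ log x := log_le_log (by linarith) hbx
  rw [abs_le]
  constructor <;> nlinarith

noncomputable def chebyshevConst : ℝ := log 2 / 2 + log 3 / 3 + log 5 / 5 - log 30 / 30

theorem log_thirty : log 30 = log 2 + log 3 + log 5 := by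
  rw [show (30 : ℝ) = 2 * 3 * 5 by norm_num, log_mul (by norm_num) (by norm_num),
    log_mul (by norm_num) (by norm_num)]

theorem chebyshevConst_mem : 0.9212 ≤ chebyshevConst ∧ chebyshevConst ≤ 0.9215 := by
  unfold chebyshevConst
  rw [log_thirty]
  constructor <;> linarith [log_two_gt_d9, log_two_lt_d9, log_three_gt_d9, log_three_lt_d9,
    log_five_gt_d9, log_five_lt_d9]

theorem logFactorialApprox_combination {x : ℝ} (hx : 0 < x) :
    logFactorialApprox x + logFactorialApprox (x / 30) - logFactorialApprox (x / 2) -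
      logFactorialApprox (x / 3) - logFactorialApprox (x / 5) = chebyshevConst * x - 1 := by
  simp only [logFactorialApprox, chebyshevConst]
  rw [log_div hx.ne' (by norm_num), log_div hx.ne' (by norm_num), log_div hx.ne' (by norm_num),
    log_div hx.ne' (by norm_num)]
  ring

theorem abs_log_factorial_div_sub_le {n k : ℕ} (hk : 0 < k) (hkn : k ≤ n) :
    |log ((n / k)! : ℝ) - logFactorialApprox (n / k)| ≤ log n := by
  have hk' : (0 : ℝ) < k := by exact_mod_cast hk
  have hx : (1 : ℝ) ≤ n / k := by
    rw [le_div_iff₀ hk', one_mul]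
    exact_mod_cast hkn
  have h := abs_log_factorial_floor_sub_le hx
  rw [Nat.floor_div_eq_div] at h
  exact h.trans (log_le_log (by linarith) (div_le_self (by linarith) (by exact_mod_cast hk)))

theorem abs_chebyshevSum_sub_le {n : ℕ} (hn : 30 ≤ n) :
    |chebyshevSum n - (chebyshevConst * n - 1)| ≤ 5 * log n := by
  have h1 := abs_log_factorial_div_sub_le (n := n) one_pos (by omega)
  simp only [Nat.div_one, Nat.cast_one, div_one] at h1
  have h2 := abs_log_factorial_div_sub_le (n := n) (k := 2) (by norm_num) (by omega)
  have h3 := abs_log_factorial_div_sub_le (n := n) (k := 3) (by norm_num) (by omega)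
  have h5 := abs_log_factorial_div_sub_le (n := n) (k := 5) (by norm_num) (by omega)
  have h30 := abs_log_factorial_div_sub_le (n := n) (k := 30) (by norm_num) (by omega)
  rw [← logFactorialApprox_combination (by positivity : (0 : ℝ) < n)]
  push_cast at h2 h3 h5 h30
  rw [abs_le] at *
  unfold chebyshevSum
  constructor <;> linarith

theorem psi_natCast_le_linear_of_base {c C : ℝ} {N : ℕ} (hN : 30 ≤ N) (hc : 0 ≤ c)
    (hbase : ∀ n ≤ N, ψ n ≤ c * n + C)
    (hstep : ∀ n : ℕ, N < n → chebyshevConst * n - 1 + 5 * log n ≤ 5 / 6 * c * n) (n : ℕ) :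
    ψ n ≤ c * n + C := by
  induction n using Nat.strong_induction_on with
  | _ n ih =>
    rcases le_or_gt n N with hn | hn
    · exact hbase n hn
    have hsum := (abs_le.1 (abs_chebyshevSum_sub_le (hN.trans hn.le))).2
    have hdiv : c * (n / 6 : ℕ) ≤ c * (n / 6) := by
      gcongr
      exact Nat.cast_div_le
    linarith [ih (n / 6) (by omega), psi_sub_psi_div_six_le_chebyshevSum n, hstep n hn]

theorem psi_natCast_le_two_mul_add (n : ℕ) : ψ n ≤ 2 * n + 102 := by
  refine psi_natCast_le_linear_of_base (N := 30) le_rfl (by norm_num) (fun n hn ↦ ?_)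
    (fun n hn ↦ ?_) n
  · have hn' : (n : ℝ) ≤ 30 := by exact_mod_cast hn
    have hlog4 : log 4 = 2 * log 2 := by
      rw [show (4 : ℝ) = 2 ^ 2 by norm_num, log_pow, Nat.cast_ofNat]
    nlinarith [psi_le_const_mul_self (Nat.cast_nonneg n), log_two_lt_d9,
      Nat.cast_nonneg (α := ℝ) n]
  · have hn' : (31 : ℝ) ≤ n := by exact_mod_cast hn
    have htangent := mul_log_sub_log_le_sub (a := n) (b := 32) (by linarith) (by norm_num)
    have hlog32 : log 32 = 5 * log 2 := by
      rw [show (32 : ℝ) = 2 ^ 5 by norm_num, log_pow, Nat.cast_ofNat]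
    linarith [mul_le_mul_of_nonneg_right chebyshevConst_mem.2 (Nat.cast_nonneg (α := ℝ) n),
      log_two_lt_d9]

theorem psi_le_five_div_four_mul_add {x : ℝ} (hx : 0 ≤ x) : ψ x ≤ 5 / 4 * x + 287 := by
  have hnat : ∀ n : ℕ, ψ n ≤ 5 / 4 * n + 287 := by
    refine psi_natCast_le_linear_of_base (N := 239) (by norm_num) (by norm_num) (fun n hn ↦ ?_)
      (fun n hn ↦ ?_)
    · have hn' : (n : ℝ) ≤ 239 := by exact_mod_cast hn
      linarith [psi_natCast_le_two_mul_add n]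
    · have hn' : (240 : ℝ) ≤ n := by exact_mod_cast hn
      have htangent := mul_log_sub_log_le_sub (a := n) (b := 256) (by linarith) (by norm_num)
      have hlog256 : log 256 = 8 * log 2 := by
        rw [show (256 : ℝ) = 2 ^ 8 by norm_num, log_pow, Nat.cast_ofNat]
      linarith [mul_le_mul_of_nonneg_right chebyshevConst_mem.2 (Nat.cast_nonneg (α := ℝ) n),
        log_two_lt_d9]
  rw [psi_eq_psi_coe_floor]
  linarith [hnat ⌊x⌋₊, Nat.floor_le hx]

theorem psi_ge_mul_sub_log {x : ℝ} (hx : 30 ≤ x) : 0.9212 * x - 5 * log x - 2 ≤ ψ x := by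
  have hn : 30 ≤ ⌊x⌋₊ := Nat.le_floor (by exact_mod_cast hx)
  have hfloor_le : (⌊x⌋₊ : ℝ) ≤ x := Nat.floor_le (by linarith)
  have hlt_floor : x < ⌊x⌋₊ + 1 := Nat.lt_floor_add_one x
  have hsum := (abs_le.1 (abs_chebyshevSum_sub_le hn)).1
  have hconst := mul_le_mul_of_nonneg_right chebyshevConst_mem.1 (Nat.cast_nonneg (α := ℝ) ⌊x⌋₊)
  have hlog : log ⌊x⌋₊ ≤ log x := log_le_log (by exact_mod_cast (by omega : 0 < ⌊x⌋₊)) hfloor_le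
  rw [psi_eq_psi_coe_floor]
  linarith [chebyshevSum_le_psi ⌊x⌋₊]

theorem psi_sub_theta_le_three_mul_psi_sqrt {x : ℝ} (hx : 1 ≤ x) : ψ x - θ x ≤ 3 * ψ √x := by
  have hroot : ∀ k : ℝ, 2 ≤ k → ψ (x ^ k⁻¹) ≤ ψ √x := fun k hk ↦ by
    rw [sqrt_eq_rpow, one_div]
    exact psi_mono (rpow_le_rpow_of_exponent_le hx (inv_anti₀ two_pos hk))
  have hsqrt : x ^ (2 : ℝ)⁻¹ = √x := by rw [sqrt_eq_rpow, one_div]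
  have hcp := psi_sub_theta_le_psi_add_psi_add_psi x
  rw [hsqrt] at hcp
  linarith [hroot 3 (by norm_num), hroot 5 (by norm_num)]

theorem exists_prime_of_theta_lt {x y : ℝ} (h : θ x < θ y) :
    ∃ p : ℕ, p.Prime ∧ x < p ∧ (p : ℝ) ≤ y := by
  by_contra! hnone
  refine h.not_ge (sum_le_sum_of_subset_of_nonneg (fun p hp ↦ ?_) fun p hp _ ↦ ?_)
  · simp only [mem_filter, mem_Ioc] at hp ⊢
    obtain ⟨⟨hp0, hpy⟩, hprime⟩ := hp
    have hpx : (p : ℝ) ≤ x := not_lt.1 fun hxp ↦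
      (hnone p hprime hxp).not_ge ((Nat.le_floor_iff' hp0.ne').1 hpy)
    exact ⟨⟨hp0, Nat.le_floor hpx⟩, hprime⟩
  · exact log_nonneg (by exact_mod_cast (mem_filter.1 hp).2.one_le)

theorem theta_lt_theta_ten_div_seven_mul {x : ℝ} (hx : 50000 ≤ x) : θ x < θ (10 / 7 * x) := by
  set y := 10 / 7 * x with hy
  have hlower := psi_ge_mul_sub_log (x := y) (by linarith)
  have hgap := psi_sub_theta_le_three_mul_psi_sqrt (x := y) (by linarith)
  have hsqrt := psi_le_five_div_four_mul_add (sqrt_nonneg y)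
  have hupper := psi_le_five_div_four_mul_add (x := x) (by linarith)
  have hsqrt_le : √y ≤ (y + 267 ^ 2) / 534 := by
    nlinarith [sq_nonneg (√y - 267), sq_sqrt (by linarith : 0 ≤ y)]
  have htangent := mul_log_sub_log_le_sub (a := y) (b := 2 ^ 17) (by linarith) (by norm_num)
  rw [log_pow, Nat.cast_ofNat] at htangent
  linarith [theta_le_psi x, log_two_lt_d9]

theorem exists_prime_mem_half_five_sevenths_of_le {n : ℕ} (hn : 100000 ≤ n) :
    ∃ q : ℕ, q.Prime ∧ n < 2 * q ∧ 7 * q ≤ 5 * n := by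
  have hn' : (100000 : ℝ) ≤ n := by exact_mod_cast hn
  obtain ⟨q, hq, hlt, hle⟩ :=
    exists_prime_of_theta_lt (theta_lt_theta_ten_div_seven_mul (x := n / 2) (by linarith))
  refine ⟨q, hq, ?_, ?_⟩
  · exact_mod_cast (by linarith : (n : ℝ) < 2 * q)
  · exact_mod_cast (by linarith : (7 * q : ℝ) ≤ 5 * n)

theorem exists_prime_mem_half_five_sevenths_of_isChain {a : ℕ} {l : List ℕ}
    (hchain : (a :: l).IsChain fun p q ↦ 7 * q ≤ 10 * p) (hprime : ∀ q ∈ l, q.Prime)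
    {n : ℕ} (hlo : 2 * a ≤ n) (hhi : ∃ q ∈ l, n < 2 * q) :
    ∃ q : ℕ, q.Prime ∧ n < 2 * q ∧ 7 * q ≤ 5 * n := by
  induction l generalizing a with
  | nil => simp at hhi
  | cons b l ih =>
    rw [List.isChain_cons_cons] at hchain
    by_cases hb : n < 2 * b
    · exact ⟨b, hprime b List.mem_cons_self, hb, by omega⟩
    · refine ih hchain.2 (fun q hq ↦ hprime q (List.mem_cons_of_mem b hq)) (by omega) ?_
      obtain ⟨q, hq, hnq⟩ := hhi
      rcases List.mem_cons.1 hq with rfl | hq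
      · exact absurd hnq hb
      · exact ⟨q, hq, hnq⟩

theorem exists_prime_mem_half_five_sevenths_of_lt {n : ℕ} (hn : n.Prime) (h2 : 2 < n)
    (hlt : n < 2 * 64871) : ∃ q : ℕ, q.Prime ∧ n < 2 * q ∧ 7 * q ≤ 5 * n := by
  rcases lt_or_ge n 22 with hsmall | hlarge
  · interval_cases n <;> norm_num at hn
    exacts [⟨2, by norm_num⟩, ⟨3, by norm_num⟩, ⟨5, by norm_num⟩, ⟨7, by norm_num⟩,
      ⟨7, by norm_num⟩, ⟨11, by norm_num⟩, ⟨11, by norm_num⟩]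
  · refine exists_prime_mem_half_five_sevenths_of_isChain (a := 11)
      (l := [13, 17, 23, 31, 43, 61, 83, 113, 157, 223, 317, 449, 641, 911, 1301, 1847, 2633,
        3761, 5351, 7643, 10909, 15583, 22259, 31793, 45413, 64871])
      (by decide) (by norm_num) hlarge ⟨64871, by simp, hlt⟩

theorem exists_prime_mem_half_five_sevenths {n : ℕ} (hn : n.Prime) (h2 : 2 < n) :
    ∃ q : ℕ, q.Prime ∧ n < 2 * q ∧ 7 * q ≤ 5 * n := by
  rcases lt_or_ge n 100000 with hsmall | hlarge
  · exact exists_prime_mem_half_five_sevenths_of_lt hn h2 (by omega)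
  · exact exists_prime_mem_half_five_sevenths_of_le hlarge

theorem next_prime_half_bound_general (p₁ : ℕ) (hp₁ : p₁.Prime) (h2 : 2 < p₁)
    (p₂ : ℕ)
    (hmin : ∀ q : ℕ, q.Prime → p₁ < 2 * q → p₂ ≤ q) :
    7 * p₂ ≤ 5 * p₁ := by
  obtain ⟨q, hq, hq₁, hq₂⟩ := exists_prime_mem_half_five_sevenths hp₁ h2
  have := hmin q hq hq₁
  omega

/-- For a prime `p₁ > 2`, the smallest prime `p₂` strictly greater than `p₁/2`
satisfies `p₂ ≤ 5 p₁ / 7`. -/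
theorem next_prime_half_bound (p₁ : ℕ) (hp₁ : p₁.Prime) (h2 : 2 < p₁)
    (p₂ : ℕ) (hp₂ : p₂.Prime) (hgt : p₁ < 2 * p₂)
    (hmin : ∀ q : ℕ, q.Prime → p₁ < 2 * q → p₂ ≤ q) :
    7 * p₂ ≤ 5 * p₁ :=
  next_prime_half_bound_general p₁ hp₁ h2 p₂ hmin
end

section
/- For every real x ≥ 25, there exists a prime p with x < p < 6x/5. -/
/-!
Chebyshev's weight `w(k) = ⌊k⌋ - ⌊k/2⌋ - ⌊k/3⌋ - ⌊k/5⌋ + ⌊k/30⌋` is `30`-periodic with values in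
`{0, 1}`, equal to `1` on `[1, 5]`. Since `log n! = ∑_{d ≤ n} Λ(d) ⌊n/d⌋`, the combination
`S(n) = log n! - log ⌊n/2⌋! - log ⌊n/3⌋! - log ⌊n/5⌋! + log ⌊n/30⌋! = ∑_{d ≤ n} Λ(d) w(⌊n/d⌋)`
is squeezed between `ψ(n) - ψ(n/6)` and `ψ(n)`, while Stirling's formula gives
`S(n) = A n + O(log n)` with `A = 0.92129…`. Hence `ψ(n) ≥ 0.9212 n - O(log n)`, and iterating the
upper bounds gives `ψ(n) ≤ 1.1 n + 15500`. If `(n, 6n/5)` contained no prime, `ψ` could grow on it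
only through prime powers `p^k`, `k ≥ 2`, at most one for each prime `p ≤ √(6n/5)`, i.e. by at
most `log 4 · √(6n/5)`; this contradicts `0.9212 · 6n/5 - 1.1 n ≫ √n` once `n ≥ 4.5 · 10⁶`.
Below that, a ladder of primes, each less than `6/5` times its predecessor, covers the range.
-/

open Real Finset
open ArithmeticFunction hiding log
open scoped Chebyshev Nat

namespace Nagura

theorem psi_natCast (n : ℕ) : ψ n = ∑ d ∈ Ioc 0 n, Λ d := by
  simp [Chebyshev.psi]

theorem psi_sub_psi {m n : ℕ} (h : m ≤ n) : ψ n - ψ m = ∑ d ∈ Ioc m n, Λ d := by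
  rw [psi_natCast, psi_natCast, ← sum_Ioc_consecutive _ (Nat.zero_le m) h, add_sub_cancel_left]

theorem log_factorial_eq_sum_vonMangoldt (n : ℕ) :
    log n ! = ∑ d ∈ Ioc 0 n, Λ d * (n / d : ℕ) := by
  have hlog : log n ! = ∑ k ∈ Ioc 0 n, log k := by
    induction n with
    | zero => simp
    | succ n ih =>
      rw [sum_Ioc_succ_top (Nat.zero_le n), ← ih, Nat.factorial_succ, Nat.cast_mul,
        log_mul (by positivity) (by positivity), add_comm, Nat.cast_succ]
  rw [hlog, ← sum_Ioc_mul_zeta_eq_sum, vonMangoldt_mul_zeta]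
  simp

theorem log_factorial_div_eq_sum_vonMangoldt (n k : ℕ) :
    log (n / k)! = ∑ d ∈ Ioc 0 n, Λ d * (n / d / k : ℕ) := by
  have hcomm (d : ℕ) : n / d / k = n / k / d := by
    rw [Nat.div_div_eq_div_mul, Nat.div_div_eq_div_mul, mul_comm]
  simp_rw [log_factorial_eq_sum_vonMangoldt, hcomm]
  refine sum_subset (Ioc_subset_Ioc_right (Nat.div_le_self n k)) fun d hd hd' ↦ ?_
  rw [Nat.div_eq_of_lt (by simp_all), Nat.cast_zero, mul_zero]

def chebyshevWeight (k : ℕ) : ℤ := k - (k / 2 : ℕ) - (k / 3 : ℕ) - (k / 5 : ℕ) + (k / 30 : ℕ)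

theorem chebyshevWeight_add_thirty (k : ℕ) : chebyshevWeight (k + 30) = chebyshevWeight k := by
  simp only [chebyshevWeight]
  rw [show (k + 30) / 2 = k / 2 + 15 by omega, show (k + 30) / 3 = k / 3 + 10 by omega,
    show (k + 30) / 5 = k / 5 + 6 by omega, show (k + 30) / 30 = k / 30 + 1 by omega]
  push_cast
  ring

theorem chebyshevWeight_mod (k : ℕ) : chebyshevWeight k = chebyshevWeight (k % 30) := by
  induction k using Nat.strong_induction_on with
  | _ k ih =>
    rcases lt_or_ge k 30 with hk | hk
    · rw [Nat.mod_eq_of_lt hk]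
    · obtain ⟨j, rfl⟩ := Nat.exists_eq_add_of_le' hk
      rw [chebyshevWeight_add_thirty, Nat.add_mod_right, ih j (by omega)]

theorem chebyshevWeight_nonneg (k : ℕ) : 0 ≤ chebyshevWeight k := by
  rw [chebyshevWeight_mod]
  have : ∀ r < 30, 0 ≤ chebyshevWeight r := by decide
  exact this _ (Nat.mod_lt k (by norm_num))

theorem chebyshevWeight_le_one (k : ℕ) : chebyshevWeight k ≤ 1 := by
  rw [chebyshevWeight_mod]
  have : ∀ r < 30, chebyshevWeight r ≤ 1 := by decide
  exact this _ (Nat.mod_lt k (by norm_num))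

theorem chebyshevWeight_eq_one {k : ℕ} (hk : k ∈ Icc 1 9) (hk6 : k ≠ 6) :
    chebyshevWeight k = 1 := by
  simp only [mem_Icc] at hk
  obtain ⟨h1, h9⟩ := hk
  interval_cases k <;> first | decide | contradiction

noncomputable def chebyshevSum (n : ℕ) : ℝ :=
  log n ! - log (n / 2)! - log (n / 3)! - log (n / 5)! + log (n / 30)!

theorem chebyshevSum_eq_sum (n : ℕ) :
    chebyshevSum n = ∑ d ∈ Ioc 0 n, Λ d * chebyshevWeight (n / d) := by
  have h1 := log_factorial_div_eq_sum_vonMangoldt n 1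
  simp only [Nat.div_one] at h1
  rw [chebyshevSum, h1, log_factorial_div_eq_sum_vonMangoldt, log_factorial_div_eq_sum_vonMangoldt,
    log_factorial_div_eq_sum_vonMangoldt, log_factorial_div_eq_sum_vonMangoldt, ← sum_sub_distrib,
    ← sum_sub_distrib, ← sum_sub_distrib, ← sum_add_distrib]
  refine sum_congr rfl fun d _ ↦ ?_
  simp only [chebyshevWeight, Int.cast_add, Int.cast_sub, Int.cast_natCast]
  ring

theorem chebyshevSum_le_psi (n : ℕ) : chebyshevSum n ≤ ψ n := by
  rw [chebyshevSum_eq_sum, psi_natCast]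
  refine sum_le_sum fun d _ ↦ mul_le_of_le_one_right vonMangoldt_nonneg ?_
  exact_mod_cast chebyshevWeight_le_one _

theorem psi_sub_psi_div_six_le_chebyshevSum (n : ℕ) : ψ n - ψ (n / 6 : ℕ) ≤ chebyshevSum n := by
  rw [psi_sub_psi (Nat.div_le_self n 6), chebyshevSum_eq_sum]
  calc ∑ d ∈ Ioc (n / 6) n, Λ d = ∑ d ∈ Ioc (n / 6) n, Λ d * chebyshevWeight (n / d) := by
        refine sum_congr rfl fun d hd ↦ ?_
        rw [mem_Ioc] at hd
        have hd0 : 0 < d := by omega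
        have hlt : n / d < 6 := (Nat.div_lt_iff_lt_mul hd0).2 (by omega)
        have hpos : 0 < n / d := Nat.div_pos hd.2 hd0
        rw [chebyshevWeight_eq_one (mem_Icc.2 ⟨hpos, by omega⟩) (by omega), Int.cast_one, mul_one]
    _ ≤ ∑ d ∈ Ioc 0 n, Λ d * chebyshevWeight (n / d) :=
        sum_le_sum_of_subset_of_nonneg (Ioc_subset_Ioc_left (Nat.zero_le _)) fun d _ _ ↦
          mul_nonneg vonMangoldt_nonneg (by exact_mod_cast chebyshevWeight_nonneg _)

theorem psi_le_chebyshevSum_add (n : ℕ) :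
    ψ n ≤ chebyshevSum n + (ψ (n / 6 : ℕ) - ψ (n / 7 : ℕ)) + ψ (n / 10 : ℕ) := by
  rw [psi_sub_psi (Nat.div_le_div_left (by norm_num) (by norm_num)), psi_natCast, psi_natCast,
    chebyshevSum_eq_sum]
  have hpoint : ∀ d ∈ Ioc 0 n, Λ d ≤ Λ d * chebyshevWeight (n / d) +
      (if d ∈ Ioc (n / 7) (n / 6) then Λ d else 0) + (if d ∈ Ioc 0 (n / 10) then Λ d else 0) := by
    intro d hd
    rw [mem_Ioc] at hd
    have hlow : d * (n / d) ≤ n := Nat.mul_div_le n d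
    have hhigh : n < d * (n / d + 1) := Nat.lt_mul_div_succ n hd.1
    have hΛ := vonMangoldt_nonneg (n := d)
    have hw : 0 ≤ Λ d * chebyshevWeight (n / d) :=
      mul_nonneg hΛ (by exact_mod_cast chebyshevWeight_nonneg _)
    have hite (t : Finset ℕ) : (0 : ℝ) ≤ if d ∈ t then Λ d else 0 := ite_nonneg hΛ le_rfl
    by_cases h6 : n / d = 6
    · have : d ∈ Ioc (n / 7) (n / 6) := by rw [h6] at hlow hhigh; rw [mem_Ioc]; omega
      rw [if_pos this]
      linarith [hite (Ioc 0 (n / 10))]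
    by_cases h10 : 10 ≤ n / d
    · have : d ∈ Ioc 0 (n / 10) := by
        have := Nat.mul_le_mul_left d h10
        rw [mem_Ioc]
        omega
      rw [if_pos this]
      linarith [hite (Ioc (n / 7) (n / 6))]
    · have hpos : 0 < n / d := Nat.div_pos hd.2 hd.1
      rw [chebyshevWeight_eq_one (mem_Icc.2 ⟨hpos, by omega⟩) h6, Int.cast_one, mul_one]
      linarith [hite (Ioc (n / 7) (n / 6)), hite (Ioc 0 (n / 10))]
  refine (sum_le_sum hpoint).trans_eq ?_
  rw [sum_add_distrib, sum_add_distrib, sum_ite_mem, sum_ite_mem, inter_eq_right.2,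
    inter_eq_right.2]
  · exact Ioc_subset_Ioc (Nat.zero_le _) (Nat.div_le_self n 10)
  · exact Ioc_subset_Ioc (Nat.zero_le _) (Nat.div_le_self n 6)

theorem log_factorial_le (n : ℕ) (hn : n ≠ 0) : log n ! ≤ n * log n - n + log n / 2 + 1 := by
  obtain ⟨k, rfl⟩ := Nat.exists_eq_succ_of_ne_zero hn
  have hmono : Stirling.stirlingSeq (k + 1) ≤ Stirling.stirlingSeq 1 :=
    Stirling.stirlingSeq'_antitone (Nat.zero_le k)
  have hlog := log_le_log (Stirling.stirlingSeq'_pos k) hmono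
  rw [Stirling.log_stirlingSeq_formula, Stirling.stirlingSeq_one, log_div (exp_pos 1).ne'
    (by positivity), log_exp, log_sqrt zero_le_two, log_mul two_ne_zero (by positivity),
    log_div (by positivity) (exp_pos 1).ne', log_exp] at hlog
  linarith

theorem mul_log_sub_self_le_mul_log_sub_self {y z : ℝ} (hz : 1 ≤ z) (hzy : z ≤ y) :
    z * log z - z ≤ y * log y - y := by
  have hz0 : 0 < z := by linarith
  have hy0 : 0 < y := by linarith
  have hlow := one_sub_inv_le_log_of_pos (div_pos hy0 hz0)
  rw [inv_div, log_div hy0.ne' hz0.ne'] at hlow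
  have h : y * (1 - z / y) = y - z := by field_simp
  nlinarith [mul_le_mul_of_nonneg_left hlow hy0.le, log_nonneg hz]

theorem mul_log_sub_self_sub_le {y z : ℝ} (hz : 1 ≤ z) (hzy : z ≤ y) :
    (y * log y - y) - (z * log z - z) ≤ (y - z) * log y := by
  have hz0 : 0 < z := by linarith
  have hy0 : 0 < y := by linarith
  have hupp := log_le_sub_one_of_pos (div_pos hy0 hz0)
  rw [log_div hy0.ne' hz0.ne'] at hupp
  have h : z * (y / z - 1) = y - z := by field_simp
  nlinarith [mul_le_mul_of_nonneg_left hupp hz0.le]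

theorem abs_log_factorial_div_sub_le {n j : ℕ} (hj : 0 < j) (hjn : j ≤ n) :
    |log (n / j)! - ((n / j : ℝ) * log (n / j : ℝ) - n / j)| ≤ log n + 1 := by
  set k := n / j
  set t := (n / j : ℝ)
  have hk : 1 ≤ k := Nat.div_pos hjn hj
  have hk' : (1 : ℝ) ≤ k := by exact_mod_cast hk
  have hkt : (k : ℝ) ≤ t := Nat.cast_div_le
  have htk : t < k + 1 := by
    rw [div_lt_iff₀ (by positivity), add_one_mul]
    exact_mod_cast Nat.lt_div_mul_add hj
  have htn : t ≤ n := div_le_self (Nat.cast_nonneg n) (by exact_mod_cast hj)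
  have hlogk : 0 ≤ log k := log_nonneg hk'
  have hlogkn : log k ≤ log n := log_le_log (by positivity) (hkt.trans htn)
  have hlogtn : log t ≤ log n := log_le_log (by linarith) htn
  have hmono := mul_log_sub_self_le_mul_log_sub_self hk' hkt
  have hlip := mul_log_sub_self_sub_le hk' hkt
  have hupp := log_factorial_le k (by omega)
  have hlow := Stirling.le_log_factorial_stirling (n := k) (by omega)
  have hlog2pi : 0 ≤ log (2 * π) := log_nonneg (by linarith [pi_gt_three])
  have hgap : (t - k) * log t ≤ log n := by nlinarith
  rw [abs_le]
  constructor <;> linarith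

noncomputable def chebyshevConst : ℝ := 7 / 15 * log 2 + 3 / 10 * log 3 + 1 / 6 * log 5

theorem chebyshevConst_gt : 0.9212 < chebyshevConst := by
  unfold chebyshevConst
  linarith [log_two_gt_d9, log_three_gt_d9, log_five_gt_d9]

theorem chebyshevConst_lt : chebyshevConst < 0.92131 := by
  unfold chebyshevConst
  linarith [log_two_lt_d9, log_three_lt_d9, log_five_lt_d9]

theorem mul_log_sub_self_combination_eq {N : ℝ} (hN : 0 < N) :
    (N * log N - N) - (N / 2 * log (N / 2) - N / 2) - (N / 3 * log (N / 3) - N / 3)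
      - (N / 5 * log (N / 5) - N / 5) + (N / 30 * log (N / 30) - N / 30) = chebyshevConst * N := by
  rw [log_div hN.ne' two_ne_zero, log_div hN.ne' three_ne_zero, log_div hN.ne' (by norm_num),
    log_div hN.ne' (by norm_num), show (30 : ℝ) = 2 * 3 * 5 by norm_num,
    log_mul (by norm_num) (by norm_num), log_mul (by norm_num) (by norm_num), chebyshevConst]
  ring

theorem abs_chebyshevSum_sub_le {n : ℕ} (hn : 30 ≤ n) :
    |chebyshevSum n - chebyshevConst * n| ≤ 5 * (log n + 1) := by
  have h1 := abs_log_factorial_div_sub_le (n := n) (j := 1) one_pos (by omega)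
  have h2 := abs_log_factorial_div_sub_le (n := n) (j := 2) two_pos (by omega)
  have h3 := abs_log_factorial_div_sub_le (n := n) (j := 3) three_pos (by omega)
  have h5 := abs_log_factorial_div_sub_le (n := n) (j := 5) (by norm_num) (by omega)
  have h30 := abs_log_factorial_div_sub_le (n := n) (j := 30) (by norm_num) (by omega)
  have hmain := mul_log_sub_self_combination_eq (N := n) (by positivity)
  simp only [Nat.div_one, Nat.cast_one, div_one, Nat.cast_ofNat] at h1 h2 h3 h5 h30
  rw [abs_le] at *
  unfold chebyshevSum
  constructor <;> linarith

theorem chebyshevSum_le_mul_add {n : ℕ} (hn : 30 ≤ n) :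
    chebyshevSum n ≤ 0.92131 * n + 5 * (log n + 1) := by
  have h := (abs_le.1 (abs_chebyshevSum_sub_le hn)).2
  have : chebyshevConst * n ≤ 0.92131 * n :=
    mul_le_mul_of_nonneg_right chebyshevConst_lt.le (Nat.cast_nonneg n)
  linarith

theorem mul_sub_le_psi {n : ℕ} (hn : 30 ≤ n) : 0.9212 * n - 5 * (log n + 1) ≤ ψ n := by
  have h := (abs_le.1 (abs_chebyshevSum_sub_le hn)).1
  have : 0.9212 * n ≤ chebyshevConst * (n : ℝ) :=
    mul_le_mul_of_nonneg_right chebyshevConst_gt.le (Nat.cast_nonneg n)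
  linarith [chebyshevSum_le_psi n]

theorem psi_le_mul_log (n : ℕ) : ψ n ≤ n * log n := by
  rw [psi_natCast]
  calc ∑ d ∈ Ioc 0 n, Λ d ≤ ∑ _d ∈ Ioc 0 n, log n := by
        refine sum_le_sum fun d hd ↦ vonMangoldt_le_log.trans ?_
        rw [mem_Ioc] at hd
        exact log_le_log (by exact_mod_cast hd.1) (by exact_mod_cast hd.2)
    _ = n * log n := by simp

theorem log_le_add_div (x : ℝ) (hx : 0 ≤ x) : log x ≤ 12.87 + x / 2 ^ 20 := by
  rcases hx.eq_or_lt with rfl | hx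
  · norm_num
  have h := log_le_sub_one_of_pos (div_pos hx (by norm_num : (0 : ℝ) < 2 ^ 20))
  rw [log_div hx.ne' (by norm_num), log_pow] at h
  linarith [log_two_lt_d9]

/-- `1.105572 = 6/5 * 0.92131` is the fixed point of `c ↦ 0.92131 + c / 6`. -/
theorem psi_le_mul_add_sq_log (n : ℕ) : ψ n ≤ 1.105572 * n + 40 * (log n + 1) ^ 2 := by
  induction n using Nat.strong_induction_on with
  | _ n ih =>
  have hlog : 0 ≤ log n := Real.log_natCast_nonneg n
  rcases le_or_gt n 35 with hsmall | hbig
  · have : (n : ℝ) ≤ 35 := by exact_mod_cast hsmall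
    nlinarith [psi_le_mul_log n]
  have hstep := psi_sub_psi_div_six_le_chebyshevSum n
  have hS := chebyshevSum_le_mul_add (n := n) (by omega)
  have hIH := ih (n / 6) (by omega)
  have hdiv : ((n / 6 : ℕ) : ℝ) ≤ n / 6 := Nat.cast_div_le
  have hlog6 : log 6 = log 2 + log 3 := by
    rw [show (6 : ℝ) = 2 * 3 by norm_num, log_mul two_ne_zero three_ne_zero]
  have hlogdiv : log ((n / 6 : ℕ) : ℝ) ≤ log n - log 6 := by
    rw [← log_div (by positivity) (by norm_num)]
    exact log_le_log (by exact_mod_cast (by omega : 0 < n / 6)) hdiv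
  have hsq : (log ((n / 6 : ℕ) : ℝ) + 1) ^ 2 ≤ (log n + 1 - log 6) ^ 2 := by
    gcongr
    linarith
  nlinarith [log_two_gt_d9, log_three_gt_d9, log_two_lt_d9, log_three_lt_d9]

/-- The induction closes because `0.92131 + 1.1 / 6 - 0.9212 / 7 + 1.1 / 10 < 1.1`. -/
theorem psi_le_mul_add (n : ℕ) : ψ n ≤ 1.1 * n + 15500 := by
  induction n using Nat.strong_induction_on with
  | _ n ih =>
  have hlog := log_le_add_div n (Nat.cast_nonneg n)
  have hlog0 : 0 ≤ log n := Real.log_natCast_nonneg n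
  rcases le_or_gt n 1000000 with hsmall | hbig
  · have : (n : ℝ) ≤ 1000000 := by exact_mod_cast hsmall
    nlinarith [psi_le_mul_add_sq_log n]
  have hsplit := psi_le_chebyshevSum_add n
  have hS := chebyshevSum_le_mul_add (n := n) (by omega)
  have hIH6 := ih (n / 6) (by omega)
  have hIH10 := ih (n / 10) (by omega)
  have h7 := mul_sub_le_psi (n := n / 7) (by omega)
  have hdiv6 : ((n / 6 : ℕ) : ℝ) ≤ n / 6 := Nat.cast_div_le
  have hdiv10 : ((n / 10 : ℕ) : ℝ) ≤ n / 10 := Nat.cast_div_le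
  have hdiv7 : (n : ℝ) / 7 - 1 < (n / 7 : ℕ) := by
    have := Nat.sub_one_lt_floor ((n : ℝ) / 7)
    rwa [Nat.floor_div_ofNat, Nat.floor_natCast] at this
  have hlog7 : log ((n / 7 : ℕ) : ℝ) ≤ log n :=
    log_le_log (by exact_mod_cast (by omega : 0 < n / 7)) (by exact_mod_cast Nat.div_le_self n 7)
  have : (1000000 : ℝ) < n := by exact_mod_cast hbig
  linarith

theorem sum_vonMangoldt_Ioc_le_theta_sqrt {n m : ℕ} (hm : m ≤ 2 * n + 1)
    (hprime : ∀ d ∈ Ioc n m, ¬ d.Prime) : ∑ d ∈ Ioc n m, Λ d ≤ θ √m := by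
  set s := {d ∈ Ioc n m | IsPrimePow d}
  have hsum : ∑ d ∈ Ioc n m, Λ d = ∑ d ∈ s, log d.minFac := by
    rw [sum_filter]
    exact sum_congr rfl fun d _ ↦ vonMangoldt_apply
  have hmaps : ∀ d ∈ s, d.minFac ∈ {p ∈ Ioc 0 (Nat.sqrt m) | p.Prime} := by
    intro d hd
    obtain ⟨hd, hpow⟩ := mem_filter.1 hd
    have hd' := mem_Ioc.1 hd
    have hsq := Nat.minFac_sq_le_self (by omega) (hprime d hd)
    simp only [mem_filter, mem_Ioc]
    refine ⟨⟨Nat.minFac_pos d, Nat.le_sqrt'.2 (hsq.trans hd'.2)⟩, Nat.minFac_prime hpow.ne_one⟩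
  -- Two powers of one prime in `(n, 2n + 1]` coincide: the larger is a multiple of the smaller.
  have hinj : Set.InjOn Nat.minFac s := by
    intro d₁ h₁ d₂ h₂ heq
    obtain ⟨hd₁, hpow₁⟩ := mem_filter.1 h₁
    obtain ⟨hd₂, hpow₂⟩ := mem_filter.1 h₂
    rw [mem_Ioc] at hd₁ hd₂
    have hdvd : d₁ ∣ d₂ ∨ d₂ ∣ d₁ := by
      rw [← hpow₁.minFac_pow_factorization_eq, ← hpow₂.minFac_pow_factorization_eq, heq]
      exact (le_total _ _).imp (pow_dvd_pow _) (pow_dvd_pow _)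
    rcases hdvd with h | h
    · exact (Nat.eq_of_dvd_of_lt_two_mul (by omega) h (by omega)).symm
    · exact Nat.eq_of_dvd_of_lt_two_mul (by omega) h (by omega)
  have htheta : θ √m = ∑ p ∈ Ioc 0 (Nat.sqrt m) with p.Prime, log p := by
    rw [Chebyshev.theta_eq_theta_coe_floor, Real.nat_floor_real_sqrt_eq_nat_sqrt, Chebyshev.theta,
      Nat.floor_natCast]
  rw [hsum, ← sum_image (f := fun p : ℕ ↦ log (p : ℝ)) hinj, htheta]
  refine sum_le_sum_of_subset_of_nonneg (image_subset_iff.2 hmaps) fun p _ _ ↦ ?_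
  exact Real.log_natCast_nonneg p

theorem psi_sub_psi_le_of_no_prime {n m : ℕ} (hnm : n ≤ m) (hm : m ≤ 2 * n + 1)
    (hprime : ∀ d ∈ Ioc n m, ¬ d.Prime) : ψ m - ψ n ≤ log 4 * √m := by
  rw [psi_sub_psi hnm]
  exact (sum_vonMangoldt_Ioc_le_theta_sqrt hm hprime).trans
    (Chebyshev.theta_le_log4_mul_x (sqrt_nonneg _))

theorem exists_prime_between_of_large {n : ℕ} (hn : 4500000 ≤ n) :
    ∃ p, p.Prime ∧ n < p ∧ 5 * p < 6 * n := by
  by_contra! hno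
  set m := (6 * n - 1) / 5
  have hprime : ∀ d ∈ Ioc n m, ¬ d.Prime := fun d hd hp ↦ by
    rw [mem_Ioc] at hd
    exact (hno d hp hd.1).not_gt (by omega)
  have hgap := psi_sub_psi_le_of_no_prime (by omega) (by omega) hprime
  have hlow := mul_sub_le_psi (n := m) (by omega)
  have hupp := psi_le_mul_add n
  have hlog := log_le_add_div m (Nat.cast_nonneg m)
  have hm : 6 * (n : ℝ) ≤ 5 * m + 5 := by exact_mod_cast (by omega : 6 * n ≤ 5 * m + 5)
  have hn' : (4500000 : ℝ) ≤ n := by exact_mod_cast hn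
  have hsqrt : √(m : ℝ) ≤ m / 2323 := by
    have h2323 : (2323 : ℝ) ≤ √m := by
      rw [le_sqrt (by norm_num) (Nat.cast_nonneg m)]
      exact_mod_cast (by omega : 2323 ^ 2 ≤ m)
    rw [le_div_iff₀ (by norm_num)]
    calc √(m : ℝ) * 2323 ≤ √m * √m := by gcongr
      _ = m := mul_self_sqrt (Nat.cast_nonneg m)
  have hlog4 : log 4 ≤ 1.3863 := by
    rw [show (4 : ℝ) = 2 ^ 2 by norm_num, log_pow]
    linarith [log_two_lt_d9]
  have : log 4 * √m ≤ 1.3863 * (m / 2323) :=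
    mul_le_mul hlog4 hsqrt (sqrt_nonneg _) (by norm_num)
  linarith

def primeLadder : List ℕ :=
  [29, 31, 37, 43, 47, 53, 61, 73, 83, 97, 113, 131, 157, 181, 211, 251, 293, 349, 409, 487, 577,
    691, 829, 991, 1187, 1423, 1699, 2029, 2423, 2903, 3469, 4159, 4987, 5981, 7177, 8609, 10321,
    12379, 14851, 17807, 21347, 25609, 30727, 36871, 44221, 53051, 63659, 76387, 91639, 109961,
    131947, 158329, 189989, 227977, 273569, 328277, 393931, 472711, 567209, 680633, 816743,
    980081, 1176089, 1411297, 1693553, 2032253, 2438693, 2926421, 3511693, 4214009, 5056781]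

theorem primeLadder_prime : ∀ p ∈ primeLadder, p.Prime := by
  norm_num [primeLadder]

theorem primeLadder_isChain : (25 :: primeLadder).IsChain (fun a b ↦ 5 * b < 6 * a) := by
  norm_num [primeLadder]

theorem exists_prime_of_isChain (a : ℕ) (ps : List ℕ) (hps : ∀ p ∈ ps, p.Prime)
    (hchain : (a :: ps).IsChain (fun a b ↦ 5 * b < 6 * a)) (x : ℝ) (hax : a ≤ x)
    (hx : ∃ p ∈ ps, x < p) : ∃ p : ℕ, p.Prime ∧ x < p ∧ (p : ℝ) < 6 * x / 5 := by
  induction ps generalizing a with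
  | nil => simp at hx
  | cons b ps ih =>
    rw [List.isChain_cons_cons] at hchain
    have hba : (5 * b : ℝ) < 6 * a := by exact_mod_cast hchain.1
    rcases lt_or_ge x b with hxb | hbx
    · exact ⟨b, hps b List.mem_cons_self, hxb, by linarith⟩
    · refine ih b (fun p hp ↦ hps p (List.mem_cons_of_mem b hp)) hchain.2 hbx ?_
      obtain ⟨p, hp, hxp⟩ := hx
      rcases List.mem_cons.1 hp with rfl | hp
      · exact absurd hxp hbx.not_gt
      · exact ⟨p, hp, hxp⟩

end Nagura

open Nagura

/-- Nagura's theorem: for every real `x ≥ 25` there exists a prime `p`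
with `x < p < 6x/5`. -/
theorem nagura (x : ℝ) (hx : 25 ≤ x) :
    ∃ p : ℕ, p.Prime ∧ x < (p : ℝ) ∧ (p : ℝ) < 6 * x / 5 := by
  rcases lt_or_ge x 4500000 with hsmall | hlarge
  · exact exists_prime_of_isChain 25 _ primeLadder_prime primeLadder_isChain x
      (by exact_mod_cast hx) ⟨5056781, by simp [primeLadder], by push_cast; linarith⟩
  · have hx0 : 0 ≤ x := by linarith
    obtain ⟨p, hp, hnp, hpn⟩ :=
      exists_prime_between_of_large (n := ⌊x⌋₊) (Nat.le_floor (by exact_mod_cast hlarge))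
    refine ⟨p, hp, (Nat.floor_lt hx0).1 hnp, ?_⟩
    have : (5 * p : ℝ) < 6 * ⌊x⌋₊ := by exact_mod_cast hpn
    linarith [Nat.floor_le hx0]
end

section
/- For the d-dimensional axis cross Ĩ_N^d := {k ∈ ℤ^d : ||k||_1 = ||k||_∞ ≤ N}, the cardinality of Ĩ_N^d is 2dN + 1, and the cardinality of its difference set D(Ĩ_N^d) = {h − k : h, k ∈ Ĩ_N^d} is 2Nd(2 + (d−1)N) + 1. -/
/-- The `d`-dimensional axis cross `Ĩ_N^d = {k ∈ ℤ^d : ‖k‖₁ = ‖k‖_∞ ≤ N}`. -/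
def axisCross (d N : ℕ) : Set (Fin d → ℤ) :=
  {k | (∑ i, (k i).natAbs) = Finset.univ.sup (fun i => (k i).natAbs) ∧
       Finset.univ.sup (fun i => (k i).natAbs) ≤ N}

/-- The difference set `D(S) = {h − k : h, k ∈ S}`. -/
def diffSet {α : Type*} [Sub α] (S : Set α) : Set α :=
  {m | ∃ h ∈ S, ∃ k ∈ S, m = h - k}

/-! The condition `‖k‖₁ = ‖k‖_∞` says that `k` has at most one nonzero coordinate, so the axis
cross consists of the points of Hamming weight `≤ 1` in the cube `[-N, N]^d`. A difference of two
such points has weight `≤ 2`, and the difference set consists of the points of weight `≤ 1` in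
`[-2N, 2N]^d` together with the points of weight exactly `2` in `[-N, N]^d`: in the second case
the two nonzero coordinates come one from each point, so neither exceeds `N`. In a product `A^ι`
with `0 ∈ A` there are `C(|ι|, m) (|A| - 1)^m` points of weight `m`. -/

open Finset

section Hamming

variable {ι α : Type*} [Fintype ι]

theorem hammingNorm_le_one_iff [Zero α] [DecidableEq α] {x : ι → α} :
    hammingNorm x ≤ 1 ↔ ∀ i, x i ≠ 0 → ∀ j, x j ≠ 0 → i = j := by
  simp [hammingNorm, card_le_one]

theorem hammingNorm_mono [Zero α] [DecidableEq α] {x y : ι → α}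
    (h : ∀ i, x i = 0 → y i = 0) : hammingNorm y ≤ hammingNorm x :=
  card_le_card fun i => by simpa using mt (h i)

theorem hammingNorm_sub_le [AddGroup α] [DecidableEq α] (x y : ι → α) :
    hammingNorm (x - y) ≤ hammingNorm x + hammingNorm y := by
  have : hammingNorm (x - y) = hammingDist x y := by
    simp [hammingNorm, hammingDist, sub_eq_zero]
  rw [this, ← hammingDist_zero_right, ← hammingDist_zero_left]
  exact hammingDist_triangle x 0 y

theorem eq_zero_of_hammingNorm_le_one [Zero α] [DecidableEq α] {x : ι → α} {i j : ι}
    (hx : hammingNorm x ≤ 1) (hi : x i ≠ 0) (hj : j ≠ i) : x j = 0 :=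
  by_contra fun hxj => hj (hammingNorm_le_one_iff.1 hx j hxj i hi)

theorem hammingNorm_le_one_of_eq_zero [Zero α] [DecidableEq α] {x : ι → α} {i : ι}
    (hx : ∀ j ≠ i, x j = 0) : hammingNorm x ≤ 1 :=
  hammingNorm_le_one_iff.2 fun j hj l hl =>
    (not_imp_comm.1 (hx j) hj).trans (not_imp_comm.1 (hx l) hl).symm

theorem hammingNorm_update_zero [DecidableEq ι] [Zero α] [DecidableEq α] {x : ι → α} {i : ι}
    (hi : x i ≠ 0) : hammingNorm (Function.update x i 0) = hammingNorm x - 1 := by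
  rw [hammingNorm, hammingNorm, ← card_erase_of_mem (s := {j | x j ≠ 0}) (by simpa using hi)]
  congr 1
  ext j
  rcases eq_or_ne j i with rfl | hj <;> simp [*]

theorem sum_eq_sup_iff_hammingNorm_le_one (f : ι → ℕ) :
    ∑ i, f i = univ.sup f ↔ hammingNorm f ≤ 1 := by
  rw [hammingNorm_le_one_iff]
  constructor
  · intro h i hi j hj
    by_contra hij
    obtain ⟨l, -, hl⟩ := exists_mem_eq_sup univ ⟨i, mem_univ i⟩ f
    obtain ⟨a, hal, ha⟩ : ∃ a, a ≠ l ∧ f a ≠ 0 := by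
      rcases eq_or_ne i l with rfl | hil
      exacts [⟨j, Ne.symm hij, hj⟩, ⟨i, hil, hi⟩]
    have := add_le_sum (f := f) (fun _ _ => Nat.zero_le _) (mem_univ l) (mem_univ a) hal.symm
    omega
  · intro h
    refine le_antisymm ?_ <|
      Finset.sup_le fun i _ => single_le_sum (fun _ _ => Nat.zero_le _) (mem_univ i)
    by_cases hf : ∃ a, f a ≠ 0
    · obtain ⟨a, ha⟩ := hf
      rw [sum_eq_single a (fun b _ hb => by_contra fun hfb => hb (h b hfb a ha)) (by simp)]
      exact le_sup (mem_univ a)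
    · push Not at hf
      simp [hf]

variable [DecidableEq ι] [Zero α] [DecidableEq α] {A : Finset α}

theorem filter_piFinset_support_eq (hA : 0 ∈ A) (s : Finset ι) :
    {x ∈ Fintype.piFinset fun _ : ι => A | ({i | x i ≠ 0} : Finset ι) = s} =
      Fintype.piFinset fun i => if i ∈ s then A.erase 0 else {0} := by
  ext x
  simp only [mem_filter, Fintype.mem_piFinset, Finset.ext_iff, mem_univ, true_and]
  rw [← forall_and]
  refine forall_congr' fun i => ?_
  split_ifs with hi
  · simp [hi, and_comm]
  · simp only [hi, iff_false, not_not, mem_singleton]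
    exact ⟨fun h => h.2, fun h => ⟨h ▸ hA, h⟩⟩

theorem card_filter_piFinset_hammingNorm_eq (hA : 0 ∈ A) (m : ℕ) :
    #{x ∈ Fintype.piFinset fun _ : ι => A | hammingNorm x = m} =
      (Fintype.card ι).choose m * (#A - 1) ^ m := by
  set S := {x ∈ Fintype.piFinset fun _ : ι => A | hammingNorm x = m}
  have hsupport : ∀ x ∈ S, ({i | x i ≠ 0} : Finset ι) ∈ powersetCard m univ :=
    fun x hx => mem_powersetCard_univ.2 (mem_filter.1 hx).2
  have hfiber : ∀ s ∈ powersetCard m (univ : Finset ι),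
      #{x ∈ S | ({i | x i ≠ 0} : Finset ι) = s} = (#A - 1) ^ m := by
    intro s hs
    have hs : #s = m := mem_powersetCard_univ.1 hs
    rw [filter_filter,
      filter_congr fun x _ => and_iff_right_of_imp fun h => by rw [hammingNorm, h, hs],
      filter_piFinset_support_eq hA, Fintype.card_piFinset]
    simp only [apply_ite Finset.card, card_erase_of_mem hA, card_singleton]
    rw [prod_ite_mem, univ_inter, prod_const, hs]
  rw [card_eq_sum_card_fiberwise hsupport, sum_congr rfl hfiber, sum_const, card_powersetCard,
    card_univ, smul_eq_mul]

theorem card_filter_piFinset_hammingNorm_le (hA : 0 ∈ A) (r : ℕ) :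
    #{x ∈ Fintype.piFinset fun _ : ι => A | hammingNorm x ≤ r} =
      ∑ m ∈ range (r + 1), (Fintype.card ι).choose m * (#A - 1) ^ m := by
  rw [card_eq_sum_card_fiberwise (f := hammingNorm) (t := range (r + 1))
    fun x hx => by simpa [Nat.lt_succ_iff] using (mem_filter.1 hx).2]
  refine sum_congr rfl fun m hm => ?_
  rw [filter_filter, ← card_filter_piFinset_hammingNorm_eq hA]
  congr 1
  refine filter_congr fun x _ => ?_
  have := mem_range.1 hm
  constructor
  · exact fun h => h.2
  · rintro rfl; exact ⟨by omega, rfl⟩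

end Hamming

noncomputable def cube (d M : ℕ) : Finset (Fin d → ℤ) :=
  Fintype.piFinset fun _ => Icc (-(M : ℤ)) M

theorem mem_cube {d M : ℕ} {k : Fin d → ℤ} : k ∈ cube d M ↔ ∀ i, (k i).natAbs ≤ M := by
  simp only [cube, Fintype.mem_piFinset, mem_Icc]
  exact forall_congr' fun i => by omega

theorem card_Icc_neg_sub_one (M : ℕ) : #(Icc (-(M : ℤ)) M) - 1 = 2 * M := by
  rw [Int.card_Icc]
  omega

theorem card_cube_filter_hammingNorm_le_one (d M : ℕ) :
    #{k ∈ cube d M | hammingNorm k ≤ 1} = 2 * d * M + 1 := by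
  rw [cube, card_filter_piFinset_hammingNorm_le (by simp), card_Icc_neg_sub_one]
  simp [sum_range_succ]
  ring

theorem card_cube_filter_hammingNorm_eq_two (d M : ℕ) :
    #{k ∈ cube d M | hammingNorm k = 2} = d.choose 2 * (2 * M) ^ 2 := by
  rw [cube, card_filter_piFinset_hammingNorm_eq (by simp), card_Icc_neg_sub_one,
    Fintype.card_fin]

theorem mem_axisCross_iff {d N : ℕ} {k : Fin d → ℤ} :
    k ∈ axisCross d N ↔ hammingNorm k ≤ 1 ∧ ∀ i, (k i).natAbs ≤ N := by
  have : hammingNorm (fun i => (k i).natAbs) = hammingNorm k := by simp [hammingNorm]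
  rw [axisCross, Set.mem_ofPred_eq, sum_eq_sup_iff_hammingNorm_le_one (fun i => (k i).natAbs),
    this, Finset.sup_le_iff]
  simp

theorem axisCross_eq_filter_cube (d N : ℕ) :
    axisCross d N = ↑{k ∈ cube d N | hammingNorm k ≤ 1} := by
  ext k
  simp [mem_axisCross_iff, mem_cube, and_comm]

theorem of_mem_diffSet_axisCross {d N : ℕ} {m : Fin d → ℤ} (hm : m ∈ diffSet (axisCross d N)) :
    (hammingNorm m ≤ 1 ∧ ∀ i, (m i).natAbs ≤ 2 * N) ∨
      (hammingNorm m = 2 ∧ ∀ i, (m i).natAbs ≤ N) := by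
  obtain ⟨h, hh, k, hk, rfl⟩ := hm
  rw [mem_axisCross_iff] at hh hk
  have hnorm := hammingNorm_sub_le h k
  rcases Nat.lt_or_ge (hammingNorm (h - k)) 2 with hlt | hge
  · refine .inl ⟨by omega, fun i => ?_⟩
    have := hh.2 i; have := hk.2 i
    simp only [Pi.sub_apply]
    omega
  refine .inr ⟨by omega, fun i => ?_⟩
  -- if `h` and `k` were both nonzero at `i`, both would vanish off `i`, and so would `h - k`
  have hdisj : h i = 0 ∨ k i = 0 := by
    by_contra! hne
    have : hammingNorm (h - k) ≤ 1 := hammingNorm_le_one_of_eq_zero (i := i) fun j hj => by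
      simp [eq_zero_of_hammingNorm_le_one hh.1 hne.1 hj,
        eq_zero_of_hammingNorm_le_one hk.1 hne.2 hj]
    omega
  have := hh.2 i; have := hk.2 i
  rcases hdisj with h0 | h0 <;> simp only [Pi.sub_apply, h0] <;> omega

theorem mem_diffSet_axisCross_of_hammingNorm_le_one {d N : ℕ} {m : Fin d → ℤ}
    (hm : hammingNorm m ≤ 1) (hbound : ∀ i, (m i).natAbs ≤ 2 * N) :
    m ∈ diffSet (axisCross d N) := by
  -- clamping `m` to `[-N, N]` leaves a remainder in `[-N, N]` with the same zeros as `m`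
  set h : Fin d → ℤ := fun i => max (-N) (min (m i) N)
  refine ⟨h, ?_, h - m, ?_, (sub_sub_cancel h m).symm⟩ <;> rw [mem_axisCross_iff]
  · exact ⟨(hammingNorm_mono fun i hi => by simp only [h, hi]; omega).trans hm,
      fun i => by simp only [h]; omega⟩
  · exact ⟨(hammingNorm_mono fun i hi => by simp only [h, Pi.sub_apply, hi]; omega).trans hm,
      fun i => by have := hbound i; simp only [h, Pi.sub_apply]; omega⟩

theorem mem_diffSet_axisCross_of_hammingNorm_eq_two {d N : ℕ} {m : Fin d → ℤ}
    (hm : hammingNorm m = 2) (hbound : ∀ i, (m i).natAbs ≤ N) :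
    m ∈ diffSet (axisCross d N) := by
  obtain ⟨i, hi⟩ : ∃ i, m i ≠ 0 := by
    by_contra! h0
    rw [show m = 0 from funext h0, hammingNorm_zero] at hm
    omega
  refine ⟨Function.update m i 0, ?_, Pi.single i (-m i), ?_, ?_⟩ <;>
    try rw [mem_axisCross_iff]
  · refine ⟨by rw [hammingNorm_update_zero hi]; omega, fun j => ?_⟩
    rcases eq_or_ne j i with rfl | hj <;> simp [*]
  · refine ⟨hammingNorm_le_one_of_eq_zero fun j hj => Pi.single_eq_of_ne hj _, fun j => ?_⟩
    rcases eq_or_ne j i with rfl | hj <;> simp [*]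
  · funext j
    rcases eq_or_ne j i with rfl | hj <;> simp [*]

theorem diffSet_axisCross_eq (d N : ℕ) :
    diffSet (axisCross d N) =
      ↑({k ∈ cube d (2 * N) | hammingNorm k ≤ 1} ∪ {k ∈ cube d N | hammingNorm k = 2}) := by
  ext m
  simp only [coe_union, coe_filter, Set.mem_union, Set.mem_ofPred_eq, mem_cube, and_comm]
  refine ⟨of_mem_diffSet_axisCross, ?_⟩
  rintro (⟨hm, hbound⟩ | ⟨hm, hbound⟩)
  exacts [mem_diffSet_axisCross_of_hammingNorm_le_one hm hbound,
    mem_diffSet_axisCross_of_hammingNorm_eq_two hm hbound]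

theorem axisCross_card_general (d N : ℕ) :
    (axisCross d N).ncard = 2 * d * N + 1 ∧
      (diffSet (axisCross d N)).ncard = 2 * N * d * (2 + (d - 1) * N) + 1 := by
  refine ⟨by rw [axisCross_eq_filter_cube, Set.ncard_coe_finset,
    card_cube_filter_hammingNorm_le_one], ?_⟩
  have hdisj : Disjoint {k ∈ cube d (2 * N) | hammingNorm k ≤ 1}
      {k ∈ cube d N | hammingNorm k = 2} :=
    disjoint_left.2 fun k hk₁ hk₂ => by
      rw [mem_filter] at hk₁ hk₂
      omega
  have hchoose : 2 * d.choose 2 = d * (d - 1) := by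
    rw [Nat.choose_two_right]
    exact Nat.mul_div_cancel' (Nat.even_mul_pred_self d).two_dvd
  rw [diffSet_axisCross_eq, Set.ncard_coe_finset, card_union_of_disjoint hdisj,
    card_cube_filter_hammingNorm_le_one, card_cube_filter_hammingNorm_eq_two]
  linear_combination (2 * N ^ 2) * hchoose

/-- Cardinalities of the axis cross and of its difference set. -/
theorem axisCross_card (d N : ℕ) (hd : 1 ≤ d) :
    (axisCross d N).ncard = 2 * d * N + 1 ∧
      (diffSet (axisCross d N)).ncard = 2 * N * d * (2 + (d - 1) * N) + 1 :=
  axisCross_card_general d N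
end
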